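/- arXiv:2510.24292 — 4 statements merged into one kernel-verified Lean document; each statement's English description precedes it below -/
import Mathlib

section
/- Let M, k, l_n be positive integers, let β, γ > 0, let E : ℝ^M → ℝ be twice continuously differentiable with F(x) = −∇E(x) and H(x) = ∇²E(x), and let v̄_1, …, v̄_{l_n} ∈ ℝ^M be a fixed orthonormal family. Suppose φ : [0,∞) → ℝ^M and v_1, …, v_k : [0,∞) → ℝ^M are continuously differentiable and satisfy, for all t ≥ 0, the unconstrained nullspace-preserving high-index saddle dynamics: φ'(t) = β ( F(φ(t)) − 2 Σ_{i=1}^k ⟨v_i(t), F(φ(t))⟩ v_i(t) ) and, for each 1 ≤ i ≤ k, v_i'(t) = −γ ( H(φ(t)) v_i(t) − ⟨v_i(t), H(φ(t)) v_i(t)⟩ v_i(t) − 2 Σ_{j=1}^{i−1} ⟨v_j(t), H(φ(t)) v_i(t)⟩ v_j(t) − Σ_{l=1}^{l_n} ⟨v̄_l, H(φ(t)) v_i(t)⟩ v̄_l ). If the initial values satisfy ⟨v_i(0), v_j(0)⟩ = δ_{ij} for all 1 ≤ i, j ≤ k and ⟨v_i(0), v̄_l⟩ = 0 for all 1 ≤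 i ≤ k, 1 ≤ l ≤ l_n, then for every t ≥ 0 one has ⟨v_i(t), v_j(t)⟩ = δ_{ij} for all 1 ≤ i, j ≤ k and ⟨v_i(t), v̄_l⟩ = 0 for all 1 ≤ i ≤ k, 1 ≤ l ≤ l_n. -/
/-!
Write `G(t) = (⟪v i t, v j t⟫ - δᵢⱼ)ᵢⱼ` and `Z(t) = (⟪v i t, v̄ l⟫)ᵢₗ` for the constraint defect.
Because the Hessian is symmetric and `v̄` is orthonormal, the NPHiSD dynamics makes `(G, Z)`
satisfy a *linear* ODE `(G, Z)' = L(t) (G, Z)`, whose coefficients are inner products of the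
`v i t` with `H (φ t) (v j t)` and hence continuous. The defect vanishes at `t = 0`, so by
Grönwall it vanishes for all `t ≥ 0`.
-/

open scoped RealInnerProductSpace BigOperators

section Gradient

variable {F : Type*} [NormedAddCommGroup F] [InnerProductSpace ℝ F] [CompleteSpace F]
  {f : F → ℝ}

open InnerProductSpace in
theorem inner_fderiv_gradient_apply {x : F} (hf : DifferentiableAt ℝ (fderiv ℝ f) x)
    (u w : F) : ⟪fderiv ℝ (gradient f) x u, w⟫ = fderiv ℝ (fderiv ℝ f) x u w := by
  let c : StrongDual ℝ F →L[ℝ] F :=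
    (toDual ℝ F).symm.toContinuousLinearEquiv.toContinuousLinearMap
  have h : HasFDerivAt (gradient f) (c.comp (fderiv ℝ (fderiv ℝ f) x)) x :=
    c.hasFDerivAt.comp x hf.hasFDerivAt
  rw [h.fderiv]
  exact toDual_symm_apply

theorem isSymmetric_fderiv_gradient (hf : ContDiff ℝ 2 f) (x : F) :
    (fderiv ℝ (gradient f) x : F →ₗ[ℝ] F).IsSymmetric := by
  have hd : DifferentiableAt ℝ (fderiv ℝ f) x :=
    (hf.fderiv_right (m := 1) le_rfl).differentiable one_ne_zero x
  intro u w
  rw [ContinuousLinearMap.coe_coe, real_inner_comm _ u,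
    inner_fderiv_gradient_apply hd, inner_fderiv_gradient_apply hd,
    hf.contDiffAt.isSymmSndFDerivAt (by simp)]

theorem ContDiff.continuous_fderiv_gradient (hf : ContDiff ℝ 2 f) :
    Continuous (fderiv ℝ (gradient f)) :=
  ((InnerProductSpace.toDual ℝ F).symm.contDiff.comp
    (hf.fderiv_right (m := 1) le_rfl)).continuous_fderiv one_ne_zero

end Gradient

theorem eq_zero_of_hasDerivWithinAt_clm_apply_self {X : Type*} [NormedAddCommGroup X]
    [NormedSpace ℝ X] {L : ℝ → X →L[ℝ] X} {d : ℝ → X} (hL : ContinuousOn L (Set.Ici 0))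
    (hd : ∀ t ≥ (0 : ℝ), HasDerivWithinAt d (L t (d t)) (Set.Ici 0) t) (h0 : d 0 = 0)
    {t : ℝ} (ht : 0 ≤ t) : d t = 0 := by
  obtain ⟨K, hK⟩ := isCompact_Icc.exists_bound_of_continuousOn
    (hL.mono (Set.Icc_subset_Ici_self : Set.Icc 0 t ⊆ _))
  refine eq_zero_of_abs_deriv_le_mul_abs_self_of_eq_zero_right (f' := fun s => L s (d s))
    (fun s hs => (hd s hs.1).continuousWithinAt.mono Set.Icc_subset_Ici_self)
    (fun s hs => (hd s hs.1).mono (Set.Ici_subset_Ici.2 hs.1)) h0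
    (fun s hs => (L s).le_of_opNorm_le (hK s ⟨hs.1, hs.2.le⟩) _) t ⟨ht, le_rfl⟩

namespace NPHiSD

open Finset

variable {E : Type*} [NormedAddCommGroup E] [InnerProductSpace ℝ E] {k ln : ℕ}

def ascentVelocity (γ : ℝ) (A : E →L[ℝ] E) (vb : Fin ln → E) (u : Fin k → E) (i : Fin k) : E :=
  -(γ • (A (u i) - ⟪u i, A (u i)⟫ • u i
    - (2:ℝ) • ∑ j ∈ univ.filter (fun j => j < i), ⟪u j, A (u i)⟫ • u j
    - ∑ l, ⟪vb l, A (u i)⟫ • vb l))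

abbrev Defect (k ln : ℕ) : Type := (Fin k → Fin k → ℝ) × (Fin k → Fin ln → ℝ)

def defect (vb : Fin ln → E) (u : Fin k → E) : Defect k ln :=
  (fun i j => ⟪u i, u j⟫ - if i = j then 1 else 0, fun i l => ⟪u i, vb l⟫)

def defectDeriv (vb : Fin ln → E) (u u' : Fin k → E) : Defect k ln :=
  (fun i j => ⟪u i, u' j⟫ + ⟪u' i, u j⟫, fun i l => ⟪u' i, vb l⟫)

noncomputable def defectMap (γ : ℝ) (A : E →L[ℝ] E) (vb : Fin ln → E) (u : Fin k → E) :
    Defect k ln →L[ℝ] Defect k ln :=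
  LinearMap.toContinuousLinearMap
    { toFun := fun d =>
        (fun i j => γ * ((⟪u i, A (u i)⟫ + ⟪u j, A (u j)⟫) * d.1 i j
          + 2 * ∑ p ∈ univ.filter (fun p => p < i), ⟪u p, A (u i)⟫ * d.1 p j
          + 2 * ∑ p ∈ univ.filter (fun p => p < j), ⟪u p, A (u j)⟫ * d.1 p i
          + ∑ l, ⟪vb l, A (u i)⟫ * d.2 j l + ∑ l, ⟪vb l, A (u j)⟫ * d.2 i l),
         fun i l => γ * (⟪u i, A (u i)⟫ * d.2 i l
          + 2 * ∑ p ∈ univ.filter (fun p => p < i), ⟪u p, A (u i)⟫ * d.2 p l))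
      map_add' := fun d d' => by
        ext <;> simp only [Prod.fst_add, Prod.snd_add, Pi.add_apply, mul_add, sum_add_distrib] <;>
          ring
      map_smul' := fun c d => by
        ext <;> simp only [Prod.smul_fst, Prod.smul_snd, Pi.smul_apply, smul_eq_mul,
          RingHom.id_apply, mul_add, mul_sum] <;> ring_nf }

theorem defect_eq_zero_iff {vb : Fin ln → E} {u : Fin k → E} :
    defect vb u = 0 ↔
      (∀ i j, ⟪u i, u j⟫ = if i = j then 1 else 0) ∧ ∀ i l, ⟪u i, vb l⟫ = 0 := by
  simp [defect, Prod.ext_iff, funext_iff, sub_eq_zero]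

theorem hasDerivWithinAt_defect (vb : Fin ln → E) {u : Fin k → ℝ → E} {u' : Fin k → E}
    {s : Set ℝ} {t : ℝ} (hu : ∀ i, HasDerivWithinAt (u i) (u' i) s t) :
    HasDerivWithinAt (fun t => defect vb (fun i => u i t)) (defectDeriv vb (fun i => u i t) u')
      s t := by
  refine .prodMk (hasDerivWithinAt_pi.2 fun i => hasDerivWithinAt_pi.2 fun j => ?_)
    (hasDerivWithinAt_pi.2 fun i => hasDerivWithinAt_pi.2 fun l => ?_)
  · exact ((hu i).inner ℝ (hu j)).sub_const _
  · simpa using (hu i).inner ℝ (hasDerivWithinAt_const t s (vb l))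

theorem continuous_defectMap (γ : ℝ) (vb : Fin ln → E) :
    Continuous fun p : (E →L[ℝ] E) × (Fin k → E) => defectMap γ p.1 vb p.2 := by
  refine continuous_clm_apply.2 fun d => ?_
  simp only [defectMap, LinearMap.coe_toContinuousLinearMap', LinearMap.coe_mk, AddHom.coe_mk]
  fun_prop

theorem continuousOn_defectMap {α : Type*} [TopologicalSpace α] (γ : ℝ) (vb : Fin ln → E)
    {A : α → E →L[ℝ] E} {u : Fin k → α → E} {S : Set α} (hA : ContinuousOn A S)
    (hu : ∀ i, ContinuousOn (u i) S) :
    ContinuousOn (fun s => defectMap γ (A s) vb fun i => u i s) S :=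
  (continuous_defectMap γ vb).comp_continuousOn (f := fun s => (A s, fun i => u i s))
    (hA.prodMk (continuousOn_pi.2 hu))

theorem inner_ascentVelocity_left (γ : ℝ) (A : E →L[ℝ] E) (vb : Fin ln → E) (u : Fin k → E)
    (i : Fin k) (w : E) :
    ⟪ascentVelocity γ A vb u i, w⟫ = -(γ * (⟪A (u i), w⟫ - ⟪u i, A (u i)⟫ * ⟪u i, w⟫
      - 2 * ∑ j ∈ univ.filter (fun j => j < i), ⟪u j, A (u i)⟫ * ⟪u j, w⟫
      - ∑ l, ⟪vb l, A (u i)⟫ * ⟪vb l, w⟫)) := by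
  simp [ascentVelocity, inner_sub_left, inner_smul_left, sum_inner, mul_sum]

theorem sum_filter_lt_mul_inner_eq (vb : Fin ln → E) (u : Fin k → E) (c : Fin k → ℝ) (q r : Fin k) :
    ∑ p ∈ univ.filter (fun p => p < q), c p * ⟪u p, u r⟫
      = ∑ p ∈ univ.filter (fun p => p < q), c p * (defect vb u).1 p r
        + if r < q then c r else 0 := by
  simp [defect, mul_sub, sum_sub_distrib, mul_ite, sum_ite_eq']

theorem defectDeriv_ascentVelocity {γ : ℝ} {A : E →L[ℝ] E}
    (hA : (A : E →ₗ[ℝ] E).IsSymmetric) {vb : Fin ln → E} (hvb : Orthonormal ℝ vb)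
    (u : Fin k → E) :
    defectDeriv vb u (ascentVelocity γ A vb u) = defectMap γ A vb u (defect vb u) := by
  have hA' : ∀ x y, ⟪A x, y⟫ = ⟪x, A y⟫ := hA
  refine Prod.ext (funext₂ fun i j => ?_) (funext₂ fun i l => ?_)
  · simp only [defectDeriv, defectMap, LinearMap.coe_toContinuousLinearMap', LinearMap.coe_mk,
      AddHom.coe_mk]
    rw [real_inner_comm, inner_ascentVelocity_left, inner_ascentVelocity_left,
      sum_filter_lt_mul_inner_eq vb, sum_filter_lt_mul_inner_eq vb]
    simp only [defect]
    rw [hA', hA', real_inner_comm (u i) (u j)]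
    simp only [real_inner_comm (vb _)]
    have hji : ⟪u j, A (u i)⟫ = ⟪u i, A (u j)⟫ := by rw [real_inner_comm, hA']
    -- The bare Hessian terms `⟪u i, A (u j)⟫` cancel against the Kronecker delta when `i = j`
    -- and against the correction term of `sum_filter_lt_mul_inner_eq` otherwise.
    rcases lt_trichotomy i j with h | rfl | h
    · simp only [if_neg h.ne, if_neg h.not_gt, if_pos h, hji]
      ring
    · simp only [if_true, if_neg (lt_irrefl i)]
      ring
    · simp only [if_neg h.ne', if_pos h, if_neg h.not_gt, hji]
      ring
  · simp only [defectDeriv, defectMap, LinearMap.coe_toContinuousLinearMap', LinearMap.coe_mk,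
      AddHom.coe_mk]
    rw [inner_ascentVelocity_left]
    have hproj : ∑ m, ⟪vb m, A (u i)⟫ * ⟪vb m, vb l⟫ = ⟪A (u i), vb l⟫ := by
      simp [orthonormal_iff_ite.mp hvb, real_inner_comm (A (u i))]
    simp only [defect, hproj]
    ring

end NPHiSD

theorem nphisd_unconstrained_structure_preservation_general
    (M k ln : ℕ)
    (β γ : ℝ)
    (En : EuclideanSpace ℝ (Fin M) → ℝ) (hEn : ContDiff ℝ 2 En)
    (F : EuclideanSpace ℝ (Fin M) → EuclideanSpace ℝ (Fin M))
    (H : EuclideanSpace ℝ (Fin M) → EuclideanSpace ℝ (Fin M) →L[ℝ] EuclideanSpace ℝ (Fin M))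
    (hH : ∀ x, H x = fderiv ℝ (gradient En) x)
    (vbar : Fin ln → EuclideanSpace ℝ (Fin M)) (hvbar : Orthonormal ℝ vbar)
    (φ : ℝ → EuclideanSpace ℝ (Fin M)) (v : Fin k → ℝ → EuclideanSpace ℝ (Fin M))
    (hφ : ∀ t ≥ (0:ℝ), HasDerivWithinAt φ
      (β • (F (φ t) - (2:ℝ) • ∑ i, ⟪v i t, F (φ t)⟫ • v i t)) (Set.Ici 0) t)
    (hv : ∀ t ≥ (0:ℝ), ∀ i : Fin k, HasDerivWithinAt (v i)
      (-(γ • ((H (φ t)) (v i t) - ⟪v i t, (H (φ t)) (v i t)⟫ • v i t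
        - (2:ℝ) • ∑ j ∈ Finset.univ.filter (fun j => j < i),
            ⟪v j t, (H (φ t)) (v i t)⟫ • v j t
        - ∑ l, ⟪vbar l, (H (φ t)) (v i t)⟫ • vbar l))) (Set.Ici 0) t)
    (hinit1 : ∀ i j : Fin k, ⟪v i 0, v j 0⟫ = if i = j then 1 else 0)
    (hinit2 : ∀ (i : Fin k) (l : Fin ln), ⟪v i 0, vbar l⟫ = 0) :
    ∀ t ≥ (0:ℝ),
      (∀ i j : Fin k, ⟪v i t, v j t⟫ = if i = j then 1 else 0)
      ∧ (∀ (i : Fin k) (l : Fin ln), ⟪v i t, vbar l⟫ = 0) := by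
  intro t ht
  have hHsymm : ∀ x, (H x : EuclideanSpace ℝ (Fin M) →ₗ[ℝ] _).IsSymmetric := fun x =>
    (hH x).symm ▸ isSymmetric_fderiv_gradient hEn x
  have hHcont : Continuous H := (funext hH : H = _) ▸ hEn.continuous_fderiv_gradient
  have hφcont : ContinuousOn φ (Set.Ici 0) := fun s hs => (hφ s hs).continuousWithinAt
  have hvcont : ∀ i, ContinuousOn (v i) (Set.Ici 0) := fun i s hs =>
    (hv s hs i).continuousWithinAt
  have hL := NPHiSD.continuousOn_defectMap γ vbar (hHcont.comp_continuousOn hφcont) hvcont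
  have hdefect : ∀ s ≥ (0 : ℝ), HasDerivWithinAt (fun s => NPHiSD.defect vbar fun i => v i s)
      (NPHiSD.defectMap γ (H (φ s)) vbar (fun i => v i s) (NPHiSD.defect vbar fun i => v i s))
      (Set.Ici 0) s := fun s hs => by
    rw [← NPHiSD.defectDeriv_ascentVelocity (hHsymm _) hvbar]
    exact NPHiSD.hasDerivWithinAt_defect vbar (hv s hs)
  exact NPHiSD.defect_eq_zero_iff.1 <| eq_zero_of_hasDerivWithinAt_clm_apply_self hL hdefect
    (NPHiSD.defect_eq_zero_iff.2 ⟨hinit1, hinit2⟩) ht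

/-- Structure preservation of the unconstrained nullspace-preserving
high-index saddle dynamics (NPHiSD): orthonormality of the ascent directions
and their orthogonality to the fixed nullspace basis are preserved in time. -/
theorem nphisd_unconstrained_structure_preservation
    (M k ln : ℕ) (hM : 0 < M) (hk : 0 < k) (hln : 0 < ln)
    (β γ : ℝ) (hβ : 0 < β) (hγ : 0 < γ)
    (En : EuclideanSpace ℝ (Fin M) → ℝ) (hEn : ContDiff ℝ 2 En)
    (F : EuclideanSpace ℝ (Fin M) → EuclideanSpace ℝ (Fin M))
    (hF : ∀ x, F x = -gradient En x)
    (H : EuclideanSpace ℝ (Fin M) → EuclideanSpace ℝ (Fin M) →L[ℝ] EuclideanSpace ℝ (Fin M))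
    (hH : ∀ x, H x = fderiv ℝ (gradient En) x)
    (vbar : Fin ln → EuclideanSpace ℝ (Fin M)) (hvbar : Orthonormal ℝ vbar)
    (φ : ℝ → EuclideanSpace ℝ (Fin M)) (v : Fin k → ℝ → EuclideanSpace ℝ (Fin M))
    (hφ : ∀ t ≥ (0:ℝ), HasDerivWithinAt φ
      (β • (F (φ t) - (2:ℝ) • ∑ i, ⟪v i t, F (φ t)⟫ • v i t)) (Set.Ici 0) t)
    (hv : ∀ t ≥ (0:ℝ), ∀ i : Fin k, HasDerivWithinAt (v i)
      (-(γ • ((H (φ t)) (v i t) - ⟪v i t, (H (φ t)) (v i t)⟫ • v i t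
        - (2:ℝ) • ∑ j ∈ Finset.univ.filter (fun j => j < i),
            ⟪v j t, (H (φ t)) (v i t)⟫ • v j t
        - ∑ l, ⟪vbar l, (H (φ t)) (v i t)⟫ • vbar l))) (Set.Ici 0) t)
    (hinit1 : ∀ i j : Fin k, ⟪v i 0, v j 0⟫ = if i = j then 1 else 0)
    (hinit2 : ∀ (i : Fin k) (l : Fin ln), ⟪v i 0, vbar l⟫ = 0) :
    ∀ t ≥ (0:ℝ),
      (∀ i j : Fin k, ⟪v i t, v j t⟫ = if i = j then 1 else 0)
      ∧ (∀ (i : Fin k) (l : Fin ln), ⟪v i t, vbar l⟫ = 0) :=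
  nphisd_unconstrained_structure_preservation_general M k ln β γ En hEn F H hH vbar hvbar φ v hφ hv
    hinit1 hinit2
end

section
/- Let H be a symmetric positive semidefinite M×M real matrix with kernel K = ker H, and let λ₁ > 0 be such that ⟨u, H u⟩ ≥ λ₁ ‖u‖₂² for every u in the orthogonal complement K^⊥ (i.e. λ₁ is a lower bound for the nonzero eigenvalues of H). Let K̄ be a linear subspace of ℝ^M and set C := ‖P_K ∘ (I − P_{K̄})‖_F, and assume C ≤ 1. Then for every unit vector v ∈ ℝ^M with P_{K̄} v = 0 one has ⟨v, H v⟩ ≥ (1 − C²) λ₁. -/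
open scoped RealInnerProductSpace BigOperators

/-- The Frobenius norm `√(tr(AᵀA))` of a linear map on Euclidean space,
computed as `√(∑ i ‖A eᵢ‖²)` over the standard orthonormal basis. -/
noncomputable def frobNorm {M : ℕ}
    (A : EuclideanSpace ℝ (Fin M) →L[ℝ] EuclideanSpace ℝ (Fin M)) : ℝ :=
  Real.sqrt (∑ i : Fin M, ‖A (EuclideanSpace.basisFun (Fin M) ℝ i)‖ ^ 2)

/-! Write `v = p + w` with `p = P_K v ∈ K = ker H` and `w ∈ Kᗮ`. By symmetry of `H`,
`⟨v, H v⟩ = ⟨w, H w⟩ ≥ λ₁ ‖w‖² = λ₁ (1 - ‖p‖²)`. Since `P_K̄ v = 0`, `p` is the image of `v`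
under `P_K ∘ (I − P_K̄)`, and the Frobenius norm dominates the operator norm, so `‖p‖ ≤ C`. -/

theorem OrthonormalBasis.norm_map_le_sqrt_sum_norm_sq_mul {ι 𝕜 E F : Type*} [Fintype ι]
    [RCLike 𝕜] [NormedAddCommGroup E] [InnerProductSpace 𝕜 E] [SeminormedAddCommGroup F]
    [NormedSpace 𝕜 F] (b : OrthonormalBasis ι 𝕜 E) (A : E →ₗ[𝕜] F) (x : E) :
    ‖A x‖ ≤ Real.sqrt (∑ i, ‖A (b i)‖ ^ 2) * ‖x‖ := by
  have hx : ‖x‖ = Real.sqrt (∑ i, ‖b.repr x i‖ ^ 2) := by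
    rw [← b.repr.norm_map, EuclideanSpace.norm_eq]
  calc ‖A x‖ = ‖∑ i, b.repr x i • A (b i)‖ := by
        conv_lhs => rw [← b.sum_repr x, map_sum]
        simp only [map_smul]
    _ ≤ ∑ i, ‖b.repr x i‖ * ‖A (b i)‖ := (norm_sum_le _ _).trans_eq (by simp only [norm_smul])
    _ ≤ Real.sqrt (∑ i, ‖b.repr x i‖ ^ 2) * Real.sqrt (∑ i, ‖A (b i)‖ ^ 2) :=
        Real.sum_mul_le_sqrt_mul_sqrt _ _ _
    _ = Real.sqrt (∑ i, ‖A (b i)‖ ^ 2) * ‖x‖ := by rw [hx, mul_comm]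

theorem norm_apply_le_frobNorm_mul {M : ℕ}
    (A : EuclideanSpace ℝ (Fin M) →L[ℝ] EuclideanSpace ℝ (Fin M)) (x : EuclideanSpace ℝ (Fin M)) :
    ‖A x‖ ≤ frobNorm A * ‖x‖ :=
  (EuclideanSpace.basisFun (Fin M) ℝ).norm_map_le_sqrt_sum_norm_sq_mul A.toLinearMap x

theorem LinearMap.IsSymmetric.inner_map_self_add_of_mem_ker {𝕜 E : Type*} [RCLike 𝕜]
    [NormedAddCommGroup E] [InnerProductSpace 𝕜 E] {T : E →ₗ[𝕜] E} (hT : T.IsSymmetric)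
    (x : E) {y : E} (hy : y ∈ LinearMap.ker T) :
    inner 𝕜 (x + y) (T (x + y)) = inner 𝕜 x (T x) := by
  rw [LinearMap.mem_ker] at hy
  rw [map_add, hy, add_zero, inner_add_left, ← hT y x, hy, inner_zero_left, add_zero]

theorem LinearMap.IsSymmetric.mul_sub_norm_sq_starProjection_ker_le {E : Type*}
    [NormedAddCommGroup E] [InnerProductSpace ℝ E] {T : E →ₗ[ℝ] E} (hT : T.IsSymmetric)
    [(LinearMap.ker T).HasOrthogonalProjection] {lam : ℝ}
    (hlow : ∀ u ∈ (LinearMap.ker T)ᗮ, lam * ‖u‖ ^ 2 ≤ ⟪u, T u⟫) (v : E) :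
    lam * (‖v‖ ^ 2 - ‖(LinearMap.ker T).starProjection v‖ ^ 2) ≤ ⟪v, T v⟫ := by
  set K := LinearMap.ker T
  have hsplit : Kᗮ.starProjection v + K.starProjection v = v := by
    rw [add_comm, K.starProjection_add_starProjection_orthogonal]
  have hquad : ⟪v, T v⟫ = ⟪Kᗮ.starProjection v, T (Kᗮ.starProjection v)⟫ := by
    conv_lhs => rw [← hsplit]
    exact hT.inner_map_self_add_of_mem_ker _ (K.starProjection_apply_mem v)
  rw [K.norm_sq_eq_add_norm_sq_starProjection v, add_sub_cancel_left, hquad]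
  exact hlow _ (Kᗮ.starProjection_apply_mem v)

theorem rayleigh_lower_bound_of_frobNorm_general (M : ℕ)
    (H : EuclideanSpace ℝ (Fin M) →L[ℝ] EuclideanSpace ℝ (Fin M))
    (hsym : ∀ x y, ⟪H x, y⟫ = ⟪x, H y⟫)
    (lam₁ : ℝ) (hlam : 0 < lam₁)
    (hlow : ∀ u ∈ (LinearMap.ker (H : EuclideanSpace ℝ (Fin M) →ₗ[ℝ] EuclideanSpace ℝ (Fin M)))ᗮ, lam₁ * ‖u‖ ^ 2 ≤ ⟪u, H u⟫)
    (Kbar : Submodule ℝ (EuclideanSpace ℝ (Fin M)))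
    (C : ℝ)
    (hC : C = frobNorm (((LinearMap.ker (H : EuclideanSpace ℝ (Fin M) →ₗ[ℝ] EuclideanSpace ℝ (Fin M))).subtypeL.comp
        (Submodule.orthogonalProjectionOnto (LinearMap.ker (H : EuclideanSpace ℝ (Fin M) →ₗ[ℝ] EuclideanSpace ℝ (Fin M))))).comp
      (ContinuousLinearMap.id ℝ (EuclideanSpace ℝ (Fin M))
        - Kbar.subtypeL.comp (Submodule.orthogonalProjectionOnto Kbar))))
    (v : EuclideanSpace ℝ (Fin M)) (hv : ‖v‖ = 1)
    (hvo : Kbar.subtypeL.comp (Submodule.orthogonalProjectionOnto Kbar) v = 0) :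
    (1 - C ^ 2) * lam₁ ≤ ⟪v, H v⟫ := by
  set K := LinearMap.ker (H : EuclideanSpace ℝ (Fin M) →ₗ[ℝ] EuclideanSpace ℝ (Fin M))
  have hp : ‖K.starProjection v‖ ≤ C := by
    have := norm_apply_le_frobNorm_mul (K.starProjection ∘L
      (ContinuousLinearMap.id ℝ _ - Kbar.starProjection)) v
    rw [ContinuousLinearMap.comp_apply, sub_apply,
      ContinuousLinearMap.id_apply, show Kbar.starProjection v = 0 from hvo, sub_zero, hv,
      mul_one] at this
    exact hC ▸ this
  calc (1 - C ^ 2) * lam₁ ≤ lam₁ * (‖v‖ ^ 2 - ‖K.starProjection v‖ ^ 2) := by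
        rw [hv]
        nlinarith [pow_le_pow_left₀ (norm_nonneg _) hp 2]
    _ ≤ ⟪v, H v⟫ := LinearMap.IsSymmetric.mul_sub_norm_sq_starProjection_ker_le hsym hlow v

/-- If `H` is symmetric positive semidefinite with kernel `K`, `λ₁ > 0` is a lower
bound for its nonzero eigenvalues, and `C = ‖P_K ∘ (I − P_K̄)‖_F ≤ 1`, then every
unit vector `v` orthogonal to `K̄` satisfies `⟨v, H v⟩ ≥ (1 − C²) λ₁`. -/
theorem rayleigh_lower_bound_of_frobNorm (M : ℕ)
    (H : EuclideanSpace ℝ (Fin M) →L[ℝ] EuclideanSpace ℝ (Fin M))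
    (hsym : ∀ x y, ⟪H x, y⟫ = ⟪x, H y⟫)
    (hpsd : ∀ x, 0 ≤ ⟪x, H x⟫)
    (lam₁ : ℝ) (hlam : 0 < lam₁)
    (hlow : ∀ u ∈ (LinearMap.ker (H : EuclideanSpace ℝ (Fin M) →ₗ[ℝ] EuclideanSpace ℝ (Fin M)))ᗮ, lam₁ * ‖u‖ ^ 2 ≤ ⟪u, H u⟫)
    (Kbar : Submodule ℝ (EuclideanSpace ℝ (Fin M)))
    (C : ℝ)
    (hC : C = frobNorm (((LinearMap.ker (H : EuclideanSpace ℝ (Fin M) →ₗ[ℝ] EuclideanSpace ℝ (Fin M))).subtypeL.comp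
        (Submodule.orthogonalProjectionOnto (LinearMap.ker (H : EuclideanSpace ℝ (Fin M) →ₗ[ℝ] EuclideanSpace ℝ (Fin M))))).comp
      (ContinuousLinearMap.id ℝ (EuclideanSpace ℝ (Fin M))
        - Kbar.subtypeL.comp (Submodule.orthogonalProjectionOnto Kbar))))
    (hC1 : C ≤ 1)
    (v : EuclideanSpace ℝ (Fin M)) (hv : ‖v‖ = 1)
    (hvo : Kbar.subtypeL.comp (Submodule.orthogonalProjectionOnto Kbar) v = 0) :
    (1 - C ^ 2) * lam₁ ≤ ⟪v, H v⟫ :=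
  rayleigh_lower_bound_of_frobNorm_general M H hsym lam₁ hlam hlow Kbar C hC v hv hvo
end

section
/- Let {u_j}_{j=1}^{k} and {n_l}_{l=1}^{l_n} be orthonormal families in ℝ^M with ⟨u_j, n_l⟩ = 0 for all j, l. Let C ≥ 0 and θ_1, …, θ_{k−1} be real numbers, set ρ_i := Σ_{j=1}^{i−1} sin²(θ_j) for 1 ≤ i ≤ k (so ρ_1 = 0), and assume C² + ρ_k ≤ 1. For each 1 ≤ i ≤ k define v_i := Σ_{j=1}^{i−1} sin(θ_j) u_j + √(1 − C² − ρ_i) u_i + w_i, where each w_i lies in the span of {n_1, …, n_{l_n}}. Let P_U denote the orthogonal projection onto U := span{u_1, …, u_k}. Then the vectors P_U v_1, …, P_U v_k are linearly independent if and only if C² + ρ_k < 1. -/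
open scoped RealInnerProductSpace BigOperators

/-!
Since `v i - w i` lies in `U` and `w i ∈ Uᗮ`, the projection `P_U v i` is `v i - w i`. Its
coordinates in the basis `u` form a lower triangular matrix with diagonal entries
`√(1 - C² - ρ i)`, so the projected vectors are independent iff every diagonal entry is nonzero.
As `ρ` is monotone, this happens iff the last one is, i.e. iff `C² + ρ_k < 1`.
-/

theorem LinearIndependent.linearIndependent_sum_smul_iff {ι ι' R E : Type*} [Fintype ι] [Ring R]
    [AddCommGroup E] [Module R E] {u : ι → E} (hu : LinearIndependent R u) (A : Matrix ι' ι R) :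
    LinearIndependent R (fun i => ∑ j, A i j • u j) ↔ LinearIndependent R A.row :=
  LinearMap.linearIndependent_iff (Fintype.linearCombination R u)
    (LinearMap.ker_eq_bot.mpr (linearIndependent_iff_injective_fintypeLinearCombination.mp hu))

theorem Matrix.linearIndependent_rows_iff_diag_ne_zero {ι K : Type*} [Fintype ι] [LinearOrder ι]
    [Field K] {A : Matrix ι ι K} (hA : A.IsLowerTriangular) :
    LinearIndependent K A.row ↔ ∀ i, A i i ≠ 0 := by
  rw [Matrix.linearIndependent_rows_iff_isUnit, Matrix.isUnit_iff_isUnit_det,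
    Matrix.det_of_isLowerTriangular A hA, isUnit_iff_ne_zero, Finset.prod_ne_zero_iff]
  simp

theorem monotone_sum_filter_lt {ι M : Type*} [Fintype ι] [LinearOrder ι]
    [AddCommMonoid M] [PartialOrder M] [IsOrderedAddMonoid M] {f : ι → M} (hf : 0 ≤ f) :
    Monotone fun i => ∑ j ∈ Finset.univ.filter (· < i), f j :=
  fun _ _ hik => Finset.sum_le_sum_of_subset_of_nonneg
    (Finset.monotone_filter_right _ fun _ _ hj => hj.trans_le hik) fun j _ _ => hf j

section PrefixDiagMatrix

variable {ι R : Type*} [LinearOrder ι]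

def prefixDiagMatrix [Zero R] (s d : ι → R) : Matrix ι ι R :=
  Matrix.of fun i j => if j < i then s j else if j = i then d i else 0

theorem prefixDiagMatrix_isLowerTriangular [Zero R] (s d : ι → R) :
    (prefixDiagMatrix s d).IsLowerTriangular := fun i j hij => by
  have hij : i < j := hij
  simp [prefixDiagMatrix, hij.not_gt, hij.ne']

@[simp]
theorem prefixDiagMatrix_apply_self [Zero R] (s d : ι → R) (i : ι) :
    prefixDiagMatrix s d i i = d i := by
  simp [prefixDiagMatrix]

theorem sum_prefixDiagMatrix_smul [Fintype ι] {E : Type*} [Semiring R] [AddCommMonoid E]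
    [Module R E] (s d : ι → R) (u : ι → E) (i : ι) :
    ∑ j, prefixDiagMatrix s d i j • u j
      = ∑ j ∈ Finset.univ.filter (· < i), s j • u j + d i • u i := by
  have hdiag : d i • u i = ∑ j, if j = i then d i • u j else 0 := by simp
  rw [Finset.sum_filter, hdiag, ← Finset.sum_add_distrib]
  refine Finset.sum_congr rfl fun j _ => ?_
  rcases lt_trichotomy j i with h | rfl | h
  · simp [prefixDiagMatrix, h, h.ne]
  · simp [prefixDiagMatrix]
  · simp [prefixDiagMatrix, h.not_gt, h.ne']

end PrefixDiagMatrix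

/-- The projected ascent directions `P_U v₁, …, P_U v_k` produced by the
nullspace-preserving construction are linearly independent if and only if
`C² + ρ_k < 1`. -/
theorem projected_directions_linearIndependent_iff (M k ln : ℕ) (hk : 0 < k)
    (u : Fin k → EuclideanSpace ℝ (Fin M)) (hu : Orthonormal ℝ u)
    (n : Fin ln → EuclideanSpace ℝ (Fin M))
    (hun : ∀ (j : Fin k) (l : Fin ln), ⟪u j, n l⟫ = 0)
    (C : ℝ) (θ : Fin k → ℝ)
    (ρ : Fin k → ℝ)
    (hρ : ∀ i : Fin k, ρ i = ∑ j ∈ Finset.univ.filter (fun j => j < i), Real.sin (θ j) ^ 2)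
    (w : Fin k → EuclideanSpace ℝ (Fin M))
    (hw : ∀ i, w i ∈ Submodule.span ℝ (Set.range n))
    (v : Fin k → EuclideanSpace ℝ (Fin M))
    (hv : ∀ i, v i = (∑ j ∈ Finset.univ.filter (fun j => j < i), Real.sin (θ j) • u j)
      + Real.sqrt (1 - C ^ 2 - ρ i) • u i + w i) :
    LinearIndependent ℝ (fun i : Fin k =>
        (Submodule.span ℝ (Set.range u)).subtypeL.comp
          ((Submodule.span ℝ (Set.range u)).orthogonalProjection) (v i))
      ↔ C ^ 2 + ρ ⟨k - 1, by omega⟩ < 1 := by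
  set U := Submodule.span ℝ (Set.range u)
  set A := prefixDiagMatrix (fun j => Real.sin (θ j)) fun i => Real.sqrt (1 - C ^ 2 - ρ i)
  have hw_perp : Submodule.span ℝ (Set.range n) ≤ Uᗮ :=
    Submodule.isOrtho_iff_le.mp <| Submodule.IsOrtho.symm <| Submodule.isOrtho_span.mpr <| by
      rintro _ ⟨j, rfl⟩ _ ⟨l, rfl⟩
      exact hun j l
  have hproj : ∀ i, U.starProjection (v i) = ∑ j, A i j • u j := fun i =>
    U.eq_starProjection_of_mem_orthogonal'
      (Submodule.sum_mem _ fun j _ => Submodule.smul_mem _ _ (Submodule.subset_span ⟨j, rfl⟩))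
      (hw_perp (hw i)) (by rw [hv, sum_prefixDiagMatrix_smul])
  have hρ_mono : Monotone ρ := fun i i' h => by
    simpa only [hρ] using monotone_sum_filter_lt (fun j => sq_nonneg (Real.sin (θ j))) h
  calc _ ↔ LinearIndependent ℝ fun i => ∑ j, A i j • u j := by
        show LinearIndependent ℝ (fun i => U.starProjection (v i)) ↔ _
        simp only [hproj]
    _ ↔ ∀ i, Real.sqrt (1 - C ^ 2 - ρ i) ≠ 0 := by
        rw [hu.linearIndependent.linearIndependent_sum_smul_iff,
          Matrix.linearIndependent_rows_iff_diag_ne_zero (prefixDiagMatrix_isLowerTriangular _ _)]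
        simp only [prefixDiagMatrix_apply_self]
    _ ↔ _ := by
        simp only [Real.sqrt_ne_zero']
        refine ⟨fun h => by linarith [h ⟨k - 1, by omega⟩], fun h i => ?_⟩
        linarith [hρ_mono (show i ≤ ⟨k - 1, by omega⟩ from Nat.le_sub_one_of_lt i.isLt)]
end

section
/- Let M, k, l_n be positive integers, τ, β, γ > 0, let E : ℝ^M → ℝ be twice continuously differentiable with F(x) = −∇E(x) and Hessian H(x) = ∇²E(x), and let v̄_1, …, v̄_{l_n} ∈ ℝ^M be a fixed orthonormal family. Consider sequences {φ_n} ⊂ ℝ^M and {v_{i,n}} ⊂ ℝ^M (1 ≤ i ≤ k, n ≥ 0) generated by the explicit Euler scheme of the nullspace-preserving high-index saddle dynamics: φ_n = φ_{n−1} + τβ ( F(φ_{n−1}) − 2 Σ_{j=1}^k ⟨v_{j,n−1}, F(φ_{n−1})⟩ v_{j,n−1} ); ṽ_{i,n} = v_{i,n−1} − τγ ( H(φ_{n−1}) v_{i,n−1} − ⟨v_{i,n−1}, H(φ_{n−1}) v_{i,n−1}⟩ v_{i,n−1} − 2 Σ_{j=1}^{i−1} ⟨v_{j,n−1}, H(φ_{n−1})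 v_{i,n−1}⟩ v_{j,n−1} − Σ_{l=1}^{l_n} ⟨v̄_l, H(φ_{n−1}) v_{i,n−1}⟩ v̄_l ); and v_{i,n} = (1/Y_{i,n}) ( ṽ_{i,n} − Σ_{j=1}^{i−1} ⟨ṽ_{i,n}, v_{j,n}⟩ v_{j,n} ), where Y_{i,n} := ‖ṽ_{i,n} − Σ_{j=1}^{i−1} ⟨ṽ_{i,n}, v_{j,n}⟩ v_{j,n}‖₂ is assumed nonzero for every i, n. If the initial values satisfy ⟨v_{i,0}, v_{j,0}⟩ = δ_{ij} for 1 ≤ i, j ≤ k and ⟨v_{i,0}, v̄_l⟩ = 0 for all 1 ≤ i ≤ k, 1 ≤ l ≤ l_n, then ⟨v_{i,n}, v̄_l⟩ = 0 for all n ≥ 0, 1 ≤ i ≤ k and 1 ≤ l ≤ l_n. -/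
open scoped RealInnerProductSpace BigOperators

/-- The explicit Euler scheme of the nullspace-preserving high-index saddle
dynamics automatically preserves orthogonality of the ascent directions to the
fixed nullspace basis. -/
theorem explicit_scheme_preserves_nullspace_orthogonality
    (M k ln : ℕ) (hM : 0 < M) (hk : 0 < k) (hln : 0 < ln)
    (τ β γ : ℝ) (hτ : 0 < τ) (hβ : 0 < β) (hγ : 0 < γ)
    (En : EuclideanSpace ℝ (Fin M) → ℝ) (hEn : ContDiff ℝ 2 En)
    (F : EuclideanSpace ℝ (Fin M) → EuclideanSpace ℝ (Fin M))
    (hF : ∀ x, F x = -gradient En x)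
    (H : EuclideanSpace ℝ (Fin M) → EuclideanSpace ℝ (Fin M) →L[ℝ] EuclideanSpace ℝ (Fin M))
    (hH : ∀ x, H x = fderiv ℝ (gradient En) x)
    (vbar : Fin ln → EuclideanSpace ℝ (Fin M)) (hvbar : Orthonormal ℝ vbar)
    (φ : ℕ → EuclideanSpace ℝ (Fin M))
    (v vt : Fin k → ℕ → EuclideanSpace ℝ (Fin M))
    (hφrec : ∀ n : ℕ, φ (n + 1) = φ n
      + (τ * β) • (F (φ n) - (2:ℝ) • ∑ j, ⟪v j n, F (φ n)⟫ • v j n))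
    (hvtrec : ∀ (n : ℕ) (i : Fin k), vt i (n + 1) = v i n
      - (τ * γ) • ((H (φ n)) (v i n) - ⟪v i n, (H (φ n)) (v i n)⟫ • v i n
        - (2:ℝ) • ∑ j ∈ Finset.univ.filter (fun j => j < i),
            ⟪v j n, (H (φ n)) (v i n)⟫ • v j n
        - ∑ l, ⟪vbar l, (H (φ n)) (v i n)⟫ • vbar l))
    (hY : ∀ (n : ℕ) (i : Fin k),
      ‖vt i (n + 1) - ∑ j ∈ Finset.univ.filter (fun j => j < i),
          ⟪vt i (n + 1), v j (n + 1)⟫ • v j (n + 1)‖ ≠ 0)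
    (hvrec : ∀ (n : ℕ) (i : Fin k), v i (n + 1) =
      (‖vt i (n + 1) - ∑ j ∈ Finset.univ.filter (fun j => j < i),
          ⟪vt i (n + 1), v j (n + 1)⟫ • v j (n + 1)‖)⁻¹
        • (vt i (n + 1) - ∑ j ∈ Finset.univ.filter (fun j => j < i),
            ⟪vt i (n + 1), v j (n + 1)⟫ • v j (n + 1)))
    (hinit1 : ∀ i j : Fin k, ⟪v i 0, v j 0⟫ = if i = j then 1 else 0)
    (hinit2 : ∀ (i : Fin k) (l : Fin ln), ⟪v i 0, vbar l⟫ = 0) :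
    ∀ (n : ℕ) (i : Fin k) (l : Fin ln), ⟪v i n, vbar l⟫ = 0 := by

  intro n
  induction n with
  | zero => exact hinit2
  | succ n ih =>
    have hvt : ∀ (i : Fin k) (l : Fin ln), ⟪vt i (n + 1), vbar l⟫ = 0 := by
      intro i l
      rw [hvtrec]
      rw [inner_sub_left, real_inner_smul_left, inner_sub_left, inner_sub_left,
        inner_sub_left, real_inner_smul_left, real_inner_smul_left, sum_inner]
      have hsum : ⟪∑ l', ⟪vbar l', (H (φ n)) (v i n)⟫ • vbar l', vbar l⟫
          = ⟪vbar l, (H (φ n)) (v i n)⟫ := hvbar.inner_left_fintype _ _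
      rw [hsum]
      simp only [real_inner_smul_left, ih, mul_zero,
        Finset.sum_const_zero, sub_zero, zero_sub]
      rw [real_inner_comm]
      ring
    have key : ∀ (m : ℕ) (i : Fin k), i.val < m → ∀ l : Fin ln, ⟪v i (n + 1), vbar l⟫ = 0 := by
      intro m
      induction m with
      | zero => intro i hi; omega
      | succ m IH =>
        intro i hi l
        rw [hvrec, real_inner_smul_left, inner_sub_left, hvt, sum_inner]
        simp only [real_inner_smul_left]
        have hz : (∑ x ∈ Finset.univ.filter (fun j => j < i),
            ⟪vt i (n + 1), v x (n + 1)⟫ * ⟪v x (n + 1), vbar l⟫) = 0 := by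
          apply Finset.sum_eq_zero
          intro j hj
          have hji : j < i := (Finset.mem_filter.mp hj).2
          rw [IH j (by omega) l, mul_zero]
        rw [hz]
        ring
    exact fun i => key (i.val + 1) i (Nat.lt_succ_self _)
end
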